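/- For the star S_n with n \ge 2 vertices (central vertex labelled n), the inverse B_{S_n} = (L_{S_n} + I)^{-1} equals (1/(2n+2)) times the matrix with diagonal entries n+2 in the first n-1 positions and 4 in position (n,n), off-diagonal entries 1 among the first n-1 rows and columns, and entries 2 in the last row and last column (off-diagonal). -/

import Mathlib

/-- The star graph on `n` vertices `0, …, n-1`, with central vertex `n-1`
(the vertex labelled `n` in 1-indexed notation) adjacent to all other vertices. -/
def starGraph (n : ℕ) : SimpleGraph (Fin n) :=
  SimpleGraph.fromRel (fun _ b => b.1 = n - 1)

/-- The claimed inverse of the modified Laplacian of the star. -/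
noncomputable def starBmat (n : ℕ) : Matrix (Fin n) (Fin n) ℝ := fun i j =>
  (1 / (2 * n + 2)) *
    (if i = j then (if i.1 = n - 1 then 4 else n + 2)
     else if i.1 = n - 1 ∨ j.1 = n - 1 then 2 else 1)

lemma starAdj (n : ℕ) (a b : Fin n) :
    (starGraph n).Adj a b ↔ a ≠ b ∧ (b.1 = n - 1 ∨ a.1 = n - 1) := by
  simp only [starGraph, SimpleGraph.fromRel_adj]

lemma starDeg (n : ℕ) (hn : 2 ≤ n) (i : Fin n) [DecidableRel (starGraph n).Adj] :
    (starGraph n).degree i = if i.1 = n - 1 then n - 1 else 1 := by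
  classical
  rw [SimpleGraph.degree]
  by_cases h : i.1 = n - 1
  · rw [if_pos h]
    have : (starGraph n).neighborFinset i = Finset.univ.erase i := by
      ext j
      simp [SimpleGraph.mem_neighborFinset, starAdj, h, eq_comm, Ne]
    rw [this, Finset.card_erase_of_mem (Finset.mem_univ _), Finset.card_univ, Fintype.card_fin]
  · rw [if_neg h]
    have hc : i ≠ (⟨n-1, by omega⟩ : Fin n) := by
      intro hh; exact h (by rw [hh])
    have : (starGraph n).neighborFinset i = {⟨n-1, by omega⟩} := by
      ext j
      simp only [SimpleGraph.mem_neighborFinset, starAdj, Finset.mem_singleton]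
      constructor
      · rintro ⟨hne, hj | hj⟩
        · exact Fin.ext hj
        · exact absurd hj h
      · rintro rfl; exact ⟨hc, Or.inl rfl⟩
    rw [this, Finset.card_singleton]

lemma starM_entry (n : ℕ) (hn : 2 ≤ n) [DecidableRel (starGraph n).Adj] (i j : Fin n) :
    ((starGraph n).lapMatrix ℝ + 1) i j =
      if i = (⟨n-1, by omega⟩ : Fin n) then (if j = (⟨n-1, by omega⟩ : Fin n) then (n : ℝ) else -1)
      else (if j = i then 2 else if j = (⟨n-1, by omega⟩ : Fin n) then -1 else 0) := by
  set c : Fin n := ⟨n-1, by omega⟩ with hc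
  have hval : ∀ x : Fin n, x = c ↔ x.1 = n - 1 := by
    intro x; constructor
    · rintro rfl; rfl
    · intro h; exact Fin.ext h
  have hM : ((starGraph n).lapMatrix ℝ + 1) i j
      = (Matrix.diagonal (fun v => ((starGraph n).degree v : ℝ))) i j
        - (starGraph n).adjMatrix ℝ i j + (1 : Matrix (Fin n) (Fin n) ℝ) i j := by
    simp [SimpleGraph.lapMatrix, SimpleGraph.degMatrix, Matrix.sub_apply]
  rw [hM]
  by_cases hij : i = j
  · subst hij
    rw [Matrix.diagonal_apply_eq, Matrix.one_apply_eq, SimpleGraph.adjMatrix_apply,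
      if_neg (by simp [starAdj]), starDeg n hn]
    by_cases h : i.1 = n - 1
    · rw [if_pos h, if_pos ((hval i).2 h), if_pos ((hval i).2 h)]
      have : ((n - 1 : ℕ) : ℝ) = (n : ℝ) - 1 := by
        have : 1 ≤ n := by omega
        push_cast [this]; ring
      rw [this]; ring
    · rw [if_neg h, if_neg (fun hh => h ((hval i).1 hh)), if_pos rfl]
      norm_num
  · rw [Matrix.diagonal_apply_ne _ hij, Matrix.one_apply_ne hij, SimpleGraph.adjMatrix_apply]
    have hji : j ≠ i := fun h => hij h.symm
    by_cases hic : i = c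
    · rw [if_pos hic]
      rw [if_neg (show ¬ j = c from fun h => hij (hic.trans h.symm))]
      rw [if_pos (by exact (starAdj n i j).2 ⟨hij, Or.inr ((hval i).1 hic)⟩)]
      ring
    · rw [if_neg hic, if_neg hji]
      by_cases hjc : j = c
      · rw [if_pos hjc, if_pos ((starAdj n i j).2 ⟨hij, Or.inl ((hval j).1 hjc)⟩)]
        ring
      · rw [if_neg hjc, if_neg (by
          rw [starAdj]
          rintro ⟨-, h | h⟩
          · exact hjc ((hval j).2 h)
          · exact hic ((hval i).2 h))]
        ring

lemma starB_entry (n : ℕ) (hn : 2 ≤ n) (i j : Fin n) :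
    starBmat n i j = (1 / (2 * n + 2)) *
      (if i = j then (if i = (⟨n-1, by omega⟩ : Fin n) then 4 else (n : ℝ) + 2)
       else if i = (⟨n-1, by omega⟩ : Fin n) ∨ j = (⟨n-1, by omega⟩ : Fin n) then 2 else 1) := by
  have hval : ∀ x : Fin n, x = (⟨n-1, by omega⟩ : Fin n) ↔ x.1 = n - 1 := by
    intro x; constructor
    · rintro rfl; rfl
    · intro h; exact Fin.ext h
  simp only [starBmat, hval]
  split_ifs <;> push_cast <;> ring

lemma starB_colsum (n : ℕ) (hn : 2 ≤ n) (k : Fin n) :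
    ∑ j : Fin n, starBmat n j k = 1 := by
  set c : Fin n := ⟨n-1, by omega⟩ with hc
  have hne : (2 * (n : ℝ) + 2) ≠ 0 := by positivity
  by_cases hkc : k = c
  · have : ∀ j : Fin n, starBmat n j k =
        (1 / (2 * n + 2)) * 2 + (if j = k then (1 / (2 * (n:ℝ) + 2)) * 2 else 0) := by
      intro j
      rw [starB_entry n hn]
      by_cases h : j = k
      · rw [if_pos h, if_pos (h.trans hkc), if_pos h]; ring
      · rw [if_neg h, if_pos (Or.inr hkc), if_neg h]; ring
    rw [Finset.sum_congr rfl (fun j _ => this j), Finset.sum_add_distrib,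
      Finset.sum_const, Finset.sum_ite_eq', if_pos (Finset.mem_univ _),
      Finset.card_univ, Fintype.card_fin]
    rw [nsmul_eq_mul]
    field_simp
  · have : ∀ j : Fin n, starBmat n j k =
        (1 / (2 * n + 2)) + (if j = k then (1 / (2 * (n:ℝ) + 2)) * (n + 1) else 0)
          + (if j = c then (1 / (2 * (n:ℝ) + 2)) else 0) := by
      intro j
      rw [starB_entry n hn]
      by_cases h : j = k
      · have hjc : j ≠ c := by rw [h]; exact hkc
        rw [if_pos h, if_neg (by rw [h]; exact hkc), if_pos h, if_neg hjc]; ring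
      · rw [if_neg h, if_neg h]
        by_cases h2 : j = c
        · rw [if_pos (Or.inl h2), if_pos h2]; ring
        · rw [if_neg (by tauto), if_neg h2]; ring
    rw [Finset.sum_congr rfl (fun j _ => this j), Finset.sum_add_distrib, Finset.sum_add_distrib,
      Finset.sum_const, Finset.sum_ite_eq', Finset.sum_ite_eq',
      if_pos (Finset.mem_univ _), if_pos (Finset.mem_univ _),
      Finset.card_univ, Fintype.card_fin]
    rw [nsmul_eq_mul]
    field_simp
    ring

theorem star_inverse (n : ℕ) (hn : 2 ≤ n) :
    letI : DecidableRel (starGraph n).Adj := Classical.decRel _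
    ((starGraph n).lapMatrix ℝ + 1)⁻¹ = starBmat n := by
  letI : DecidableRel (starGraph n).Adj := Classical.decRel _
  set c : Fin n := ⟨n-1, by omega⟩ with hc
  have hne : (2 * (n : ℝ) + 2) ≠ 0 := by positivity
  apply Matrix.inv_eq_right_inv
  ext i k
  rw [Matrix.mul_apply]
  by_cases hic : i = c
  · -- center row
    subst hic
    have hsum : ∀ j : Fin n, ((starGraph n).lapMatrix ℝ + 1) c j * starBmat n j k
        = -(starBmat n j k) + (if j = c then ((n : ℝ) + 1) * starBmat n c k else 0) := by
      intro j
      rw [starM_entry n hn, if_pos rfl]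
      by_cases h : j = c
      · rw [if_pos h, if_pos h, h]; ring
      · rw [if_neg h, if_neg h]; ring
    rw [Finset.sum_congr rfl (fun j _ => hsum j), Finset.sum_add_distrib,
      Finset.sum_neg_distrib, starB_colsum n hn, Finset.sum_ite_eq',
      if_pos (Finset.mem_univ _)]
    rw [starB_entry n hn]
    by_cases hk : k = c
    · subst hk
      rw [if_pos rfl, if_pos rfl, Matrix.one_apply_eq]
      field_simp
      ring
    · rw [if_neg (fun h => hk h.symm), if_pos (Or.inl rfl),
        Matrix.one_apply_ne (fun h => hk h.symm)]
      field_simp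
      ring
  · -- non-center row
    have hsum : ∀ j : Fin n, ((starGraph n).lapMatrix ℝ + 1) i j * starBmat n j k
        = (if j = i then 2 * starBmat n i k else 0)
          + (if j = c then -(starBmat n c k) else 0) := by
      intro j
      rw [starM_entry n hn, if_neg hic]
      by_cases h : j = i
      · rw [if_pos h, if_pos h, if_neg (by rw [h]; exact hic), h]; ring
      · rw [if_neg h, if_neg h]
        by_cases h2 : j = c
        · rw [if_pos h2, if_pos h2, h2]; ring
        · rw [if_neg h2, if_neg h2]; ring
    rw [Finset.sum_congr rfl (fun j _ => hsum j), Finset.sum_add_distrib,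
      Finset.sum_ite_eq', Finset.sum_ite_eq', if_pos (Finset.mem_univ _),
      if_pos (Finset.mem_univ _)]
    rw [starB_entry n hn, starB_entry n hn]
    by_cases hk : k = i
    · subst hk
      rw [if_pos rfl, if_neg hic, if_neg (fun h => hic h.symm),
        if_pos (Or.inl rfl), Matrix.one_apply_eq]
      field_simp
      ring
    · rw [if_neg (fun h => hk h.symm), Matrix.one_apply_ne (fun h => hk h.symm)]
      by_cases hkc : k = c
      · rw [if_pos (Or.inr hkc), if_pos (by rw [hkc]), if_pos rfl]
        ring
      · rw [if_neg (by tauto), if_neg (fun h => hkc h.symm), if_pos (Or.inl rfl)]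
        ring
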